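/- arXiv:math-ph/0210026 — 2 statements merged into one kernel-verified Lean document; each statement's English description precedes it below -/
import Mathlib

section
/- Let q = (q_1, …, q_k) : ℝⁿ × ℝⁿ → ℝᵏ be a smooth map whose components have pairwise vanishing Poisson brackets, and let Φ : ℝᵏ × (ℝⁿ × ℝⁿ) → ℝⁿ × ℝⁿ be a joint Hamiltonian flow of q. Then for every point ν ∈ ℝⁿ × ℝⁿ and every t = (t_1, …, t_k) ∈ ℝᵏ, setting ν_1 = ν and ν_{j+1} = Φ(t_j ε_j, ν_j) for j = 1, …, k−1 (where (ε_j) is the standard basis of ℝᵏ), the action of the path s ∈ [0,1] ↦ Φ(st, ν) equals the sum over j = 1, …, k of the actions of the paths s ∈ [0, t_j] ↦ Φ(s ε_j, ν_j). -/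
noncomputable section

open Finset

/-- The Hamiltonian vector field of `f` on the phase space `T*ℝⁿ = ℝⁿ × ℝⁿ`:
`H_f(x, ξ) = (∂_ξ f, −∂_x f)`. -/
def hamVF {n : ℕ} (f : (Fin n → ℝ) × (Fin n → ℝ) → ℝ) :
    (Fin n → ℝ) × (Fin n → ℝ) → (Fin n → ℝ) × (Fin n → ℝ) :=
  fun ν => (fun j => fderiv ℝ f ν (0, Pi.single j 1),
            fun j => -fderiv ℝ f ν (Pi.single j 1, 0))

/-- The Poisson bracket `{f, g} = Σ_j (∂_{ξ_j} f ∂_{x_j} g − ∂_{x_j} f ∂_{ξ_j} g)`. -/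
def poisson {n : ℕ} (f g : (Fin n → ℝ) × (Fin n → ℝ) → ℝ) :
    (Fin n → ℝ) × (Fin n → ℝ) → ℝ :=
  fun ν => ∑ j : Fin n,
    (fderiv ℝ f ν (0, Pi.single j 1) * fderiv ℝ g ν (Pi.single j 1, 0) -
     fderiv ℝ f ν (Pi.single j 1, 0) * fderiv ℝ g ν (0, Pi.single j 1))

/-- `Φ : ℝᵏ × (ℝⁿ × ℝⁿ) → ℝⁿ × ℝⁿ` is a joint Hamiltonian flow of
`q = (q_1, …, q_k)`: it is smooth, `Φ(0, ν) = ν`, and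
`∂Φ/∂t_j(t, ν) = H_{q_j}(Φ(t, ν))` for all `j`, `t`, `ν`. -/
def IsJointFlow {n k : ℕ} (q : Fin k → (Fin n → ℝ) × (Fin n → ℝ) → ℝ)
    (Φ : (Fin k → ℝ) → (Fin n → ℝ) × (Fin n → ℝ) → (Fin n → ℝ) × (Fin n → ℝ)) : Prop :=
  ContDiff ℝ (⊤ : ℕ∞) (fun p : (Fin k → ℝ) × ((Fin n → ℝ) × (Fin n → ℝ)) => Φ p.1 p.2) ∧
  (∀ ν, Φ 0 ν = ν) ∧
  ∀ (j : Fin k) (t : Fin k → ℝ) ν,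
    fderiv ℝ (fun s => Φ s ν) t (Pi.single j 1) = hamVF (q j) (Φ t ν)

/-- The action `A(c) = ∫_a^b ⟨c_ξ(s), c_x′(s)⟩ ds` of the curve `c : [a,b] → ℝⁿ × ℝⁿ`. -/
def pathAction {n : ℕ} (a b : ℝ) (c : ℝ → (Fin n → ℝ) × (Fin n → ℝ)) : ℝ :=
  ∫ s in a..b, ∑ j : Fin n, (c s).2 j * deriv (fun u => (c u).1 j) s

namespace ActionDecompAux

variable {n k : ℕ} {q : Fin k → (Fin n → ℝ) × (Fin n → ℝ) → ℝ}
  {Φ : (Fin k → ℝ) → (Fin n → ℝ) × (Fin n → ℝ) → (Fin n → ℝ) × (Fin n → ℝ)}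

lemma contDiff_flow (hΦ : IsJointFlow q Φ) (μ : (Fin n → ℝ) × (Fin n → ℝ)) :
    ContDiff ℝ (⊤ : ℕ∞) (fun w => Φ w μ) :=
  hΦ.1.comp (contDiff_id.prodMk contDiff_const)

lemma contDiff_hamVF {f : (Fin n → ℝ) × (Fin n → ℝ) → ℝ} (hf : ContDiff ℝ (⊤ : ℕ∞) f) :
    ContDiff ℝ 1 (hamVF f) := by
  have hD : ContDiff ℝ 1 (fderiv ℝ f) := (hf.of_le (by exact WithTop.coe_le_coe.2 le_top) : ContDiff ℝ 2 f).fderiv_right (by norm_num)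
  apply ContDiff.prodMk
  · exact contDiff_pi.2 fun j => hD.clm_apply contDiff_const
  · exact contDiff_pi.2 fun j => (hD.clm_apply contDiff_const).neg

lemma fderiv_flow_apply (hΦ : IsJointFlow q Φ) (μ : (Fin n → ℝ) × (Fin n → ℝ))
    (w v : Fin k → ℝ) :
    fderiv ℝ (fun s => Φ s μ) w v = ∑ j : Fin k, v j • hamVF (q j) (Φ w μ) := by
  have hv : v = ∑ j : Fin k, v j • (Pi.single j (1:ℝ) : Fin k → ℝ) := by
    funext i
    rw [Finset.sum_apply]
    simp [Pi.single_apply]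
  conv_lhs => rw [hv]
  rw [map_sum]
  refine Finset.sum_congr rfl fun j _ => ?_
  rw [map_smul, hΦ.2.2 j w μ]

lemma hasDerivAt_flow_comp (hΦ : IsJointFlow q Φ) (μ : (Fin n → ℝ) × (Fin n → ℝ))
    {c : ℝ → Fin k → ℝ} {c' : Fin k → ℝ} {s : ℝ} (hc : HasDerivAt c c' s) :
    HasDerivAt (fun r => Φ (c r) μ) (∑ j : Fin k, c' j • hamVF (q j) (Φ (c s) μ)) s := by
  have hF : HasFDerivAt (fun w => Φ w μ) (fderiv ℝ (fun w => Φ w μ) (c s)) (c s) :=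
    ((contDiff_flow hΦ μ).differentiable (by simp) (c s)).hasFDerivAt
  have := hF.comp_hasDerivAt s hc
  rwa [fderiv_flow_apply hΦ μ (c s) c'] at this

lemma ode_unique {E : Type*} [NormedAddCommGroup E] [NormedSpace ℝ E] {V : E → E}
    (hV : ContDiff ℝ 1 V) {f g : ℝ → E}
    (hf : ∀ r, HasDerivAt f (V (f r)) r) (hg : ∀ r, HasDerivAt g (V (g r)) r)
    (h0 : f 0 = g 0) : f = g := by
  have hfc : Continuous f := by
    rw [continuous_iff_continuousAt]; exact fun r => (hf r).continuousAt
  have hgc : Continuous g := by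
    rw [continuous_iff_continuousAt]; exact fun r => (hg r).continuousAt
  have hS : IsClosed {r : ℝ | f r = g r} := isClosed_eq hfc hgc
  have hopen : IsOpen {r : ℝ | f r = g r} := by
    rw [isOpen_iff_mem_nhds]
    intro r₀ hr₀
    obtain ⟨K, s, hs, hlip⟩ := (hV.contDiffAt (x := f r₀)).exists_lipschitzOnWith
    have heq : f =ᶠ[nhds r₀] g := by
      apply ODE_solution_unique_of_eventually (v := fun _ => V) (s := fun _ => s)
        (Filter.Eventually.of_forall fun _ => hlip) _ _ hr₀
      · filter_upwards [hfc.continuousAt.preimage_mem_nhds hs] with r hr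
        exact ⟨hf r, hr⟩
      · have : g ⁻¹' s ∈ nhds r₀ := by
          apply hgc.continuousAt.preimage_mem_nhds
          rwa [show g r₀ = f r₀ from hr₀.symm]
        filter_upwards [this] with r hr
        exact ⟨hg r, hr⟩
    exact heq.mono fun r h => h
  have : {r : ℝ | f r = g r} = Set.univ := by
    apply IsClopen.eq_univ ⟨hS, hopen⟩
    exact ⟨0, h0⟩
  funext r
  have : r ∈ {r : ℝ | f r = g r} := this ▸ Set.mem_univ r
  exact this


lemma flow_add (hq : ∀ j, ContDiff ℝ (⊤ : ℕ∞) (q j)) (hΦ : IsJointFlow q Φ)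
    (v w : Fin k → ℝ) (μ : (Fin n → ℝ) × (Fin n → ℝ)) :
    Φ (v + w) μ = Φ v (Φ w μ) := by
  set V : (Fin n → ℝ) × (Fin n → ℝ) → (Fin n → ℝ) × (Fin n → ℝ) :=
    fun y => ∑ j : Fin k, v j • hamVF (q j) y with hVdef
  have hV : ContDiff ℝ 1 V := by
    apply ContDiff.sum
    intro j _
    exact (contDiff_hamVF (hq j)).const_smul (v j)
  have hcv : ∀ r : ℝ, HasDerivAt (fun x : ℝ => x • v + w) v r := by
    intro r
    simpa using ((hasDerivAt_id r).smul_const v).add_const w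
  have hcv' : ∀ r : ℝ, HasDerivAt (fun x : ℝ => x • v) v r := by
    intro r
    simpa using (hasDerivAt_id r).smul_const v
  have hf : ∀ r : ℝ, HasDerivAt (fun r : ℝ => Φ (r • v + w) μ)
      (V (Φ (r • v + w) μ)) r := fun r => hasDerivAt_flow_comp hΦ μ (hcv r)
  have hg : ∀ r : ℝ, HasDerivAt (fun r : ℝ => Φ (r • v) (Φ w μ))
      (V (Φ (r • v) (Φ w μ))) r := fun r => hasDerivAt_flow_comp hΦ (Φ w μ) (hcv' r)
  have h0 : (fun r : ℝ => Φ (r • v + w) μ) 0 = (fun r : ℝ => Φ (r • v) (Φ w μ)) 0 := by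
    simp [hΦ.2.1]
  have := ode_unique hV hf hg h0
  have h1 := congrFun this 1
  simpa using h1


section pmap

variable (q Φ ν) in
noncomputable def pmap : (Fin k → ℝ) → Fin k → ℝ :=
  fun w j => ∑ m : Fin n, (Φ w ν).2 m * (hamVF (q j) (Φ w ν)).1 m

variable {ν : (Fin n → ℝ) × (Fin n → ℝ)}

lemma fderiv_L_comp {E F : Type*} [NormedAddCommGroup E] [NormedSpace ℝ E]
    [NormedAddCommGroup F] [NormedSpace ℝ F] (L : F →L[ℝ] ℝ) {G : E → F} {w : E}
    (hG : DifferentiableAt ℝ G w) (v : E) :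
    fderiv ℝ (fun u => L (G u)) w v = L (fderiv ℝ G w v) := by
  have := (L.hasFDerivAt.comp w hG.hasFDerivAt).fderiv
  have h2 : fderiv ℝ (fun u => L (G u)) w = L.comp (fderiv ℝ G w) := this
  rw [h2]; rfl

lemma diff_flow (hΦ : IsJointFlow q Φ) (w : Fin k → ℝ) :
    DifferentiableAt ℝ (fun u => Φ u ν) w :=
  ((contDiff_flow hΦ ν).differentiable (by simp)) w

lemma fderiv_flow_fst (hΦ : IsJointFlow q Φ) (m : Fin n) (w : Fin k → ℝ) (j : Fin k) :
    fderiv ℝ (fun u => (Φ u ν).1 m) w (Pi.single j 1) = (hamVF (q j) (Φ w ν)).1 m := by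
  have := fderiv_L_comp ((ContinuousLinearMap.proj m).comp
    (ContinuousLinearMap.fst ℝ (Fin n → ℝ) (Fin n → ℝ))) (diff_flow (ν := ν) hΦ w)
    (Pi.single j 1)
  simp only [ContinuousLinearMap.coe_comp', Function.comp_apply,
    ContinuousLinearMap.coe_fst', ContinuousLinearMap.proj_apply] at this
  rw [this, hΦ.2.2 j w ν]

lemma fderiv_flow_snd (hΦ : IsJointFlow q Φ) (m : Fin n) (w : Fin k → ℝ) (j : Fin k) :
    fderiv ℝ (fun u => (Φ u ν).2 m) w (Pi.single j 1) = (hamVF (q j) (Φ w ν)).2 m := by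
  have := fderiv_L_comp ((ContinuousLinearMap.proj m).comp
    (ContinuousLinearMap.snd ℝ (Fin n → ℝ) (Fin n → ℝ))) (diff_flow (ν := ν) hΦ w)
    (Pi.single j 1)
  simp only [ContinuousLinearMap.coe_comp', Function.comp_apply,
    ContinuousLinearMap.coe_snd', ContinuousLinearMap.proj_apply] at this
  rw [this, hΦ.2.2 j w ν]

lemma contDiff_X (hΦ : IsJointFlow q Φ) (m : Fin n) :
    ContDiff ℝ (⊤ : ℕ∞) (fun u => (Φ u ν).1 m) :=
  (((ContinuousLinearMap.proj m).comp
    (ContinuousLinearMap.fst ℝ (Fin n → ℝ) (Fin n → ℝ))).contDiff).comp (contDiff_flow hΦ ν)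

lemma contDiff_Xi (hΦ : IsJointFlow q Φ) (m : Fin n) :
    ContDiff ℝ (⊤ : ℕ∞) (fun u => (Φ u ν).2 m) :=
  (((ContinuousLinearMap.proj m).comp
    (ContinuousLinearMap.snd ℝ (Fin n → ℝ) (Fin n → ℝ))).contDiff).comp (contDiff_flow hΦ ν)

lemma contDiff_ham_fst (hq : ∀ j, ContDiff ℝ (⊤ : ℕ∞) (q j)) (hΦ : IsJointFlow q Φ)
    (j : Fin k) (m : Fin n) :
    ContDiff ℝ 2 (fun w => (hamVF (q j) (Φ w ν)).1 m) := by
  have hD : ContDiff ℝ 2 (fderiv ℝ (q j)) :=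
    ((hq j).of_le (by exact WithTop.coe_le_coe.2 le_top) : ContDiff ℝ 3 (q j)).fderiv_right (by norm_num)
  exact (hD.comp ((contDiff_flow hΦ ν).of_le (by exact WithTop.coe_le_coe.2 le_top))).clm_apply contDiff_const

lemma contDiff_pmap (hq : ∀ j, ContDiff ℝ (⊤ : ℕ∞) (q j)) (hΦ : IsJointFlow q Φ) (j : Fin k) :
    ContDiff ℝ 2 (fun w => pmap q Φ ν w j) := by
  apply ContDiff.sum
  intro m _
  exact ((contDiff_Xi hΦ m).of_le (by exact WithTop.coe_le_coe.2 le_top)).mul (contDiff_ham_fst hq hΦ j m)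


lemma pmap_symm (hq : ∀ j, ContDiff ℝ (⊤ : ℕ∞) (q j)) (hcomm : ∀ i j y, poisson (q i) (q j) y = 0)
    (hΦ : IsJointFlow q Φ) (w : Fin k → ℝ) (i j : Fin k) :
    fderiv ℝ (fun u => pmap q Φ ν u j) w (Pi.single i 1) =
      fderiv ℝ (fun u => pmap q Φ ν u i) w (Pi.single j 1) := by
  have key : ∀ (a b : Fin k),
      fderiv ℝ (fun u => pmap q Φ ν u a) w (Pi.single b 1)
        = (∑ m : Fin n, (Φ w ν).2 m *
            (fderiv ℝ (fderiv ℝ (fun u => (Φ u ν).1 m)) w (Pi.single b 1)) (Pi.single a 1))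
          + ∑ m : Fin n, (hamVF (q a) (Φ w ν)).1 m * (hamVF (q b) (Φ w ν)).2 m := by
    intro a b
    have hdiff_Xi : ∀ m : Fin n, DifferentiableAt ℝ (fun u => (Φ u ν).2 m) w := fun m =>
      ((contDiff_Xi hΦ m).differentiable (by simp)) w
    have hdiff_ham : ∀ m : Fin n, DifferentiableAt ℝ (fun u => (hamVF (q a) (Φ u ν)).1 m) w :=
      fun m => ((contDiff_ham_fst hq hΦ a m).differentiable (by norm_num)) w
    have e1 : fderiv ℝ (fun u => pmap q Φ ν u a) w
        = ∑ m : Fin n, fderiv ℝ (fun u => (Φ u ν).2 m * (hamVF (q a) (Φ u ν)).1 m) w := by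
      exact fderiv_fun_sum (fun m _ => ((hdiff_Xi m).mul (hdiff_ham m)))
    rw [e1, ContinuousLinearMap.sum_apply]
    have e2 : ∀ m : Fin n,
        fderiv ℝ (fun u => (Φ u ν).2 m * (hamVF (q a) (Φ u ν)).1 m) w (Pi.single b 1)
        = (Φ w ν).2 m * fderiv ℝ (fun u => (hamVF (q a) (Φ u ν)).1 m) w (Pi.single b 1)
          + (hamVF (q a) (Φ w ν)).1 m * fderiv ℝ (fun u => (Φ u ν).2 m) w (Pi.single b 1) := by
      intro m
      rw [fderiv_fun_mul (hdiff_Xi m) (hdiff_ham m)]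
      simp [smul_eq_mul]
    have e3 : ∀ m : Fin n,
        fderiv ℝ (fun u => (hamVF (q a) (Φ u ν)).1 m) w (Pi.single b 1)
        = (fderiv ℝ (fderiv ℝ (fun u => (Φ u ν).1 m)) w (Pi.single b 1)) (Pi.single a 1) := by
      intro m
      have hAa : (fun u => (hamVF (q a) (Φ u ν)).1 m)
          = fun u => (fderiv ℝ (fun u' => (Φ u' ν).1 m) u) (Pi.single a 1) := by
        funext u
        rw [fderiv_flow_fst hΦ m u a]
      rw [hAa]
      have hc : DifferentiableAt ℝ (fderiv ℝ (fun u' => (Φ u' ν).1 m)) w := by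
        have : ContDiff ℝ 1 (fderiv ℝ (fun u' => (Φ u' ν).1 m)) :=
          ((contDiff_X hΦ m).of_le (by exact WithTop.coe_le_coe.2 le_top) : ContDiff ℝ 2 _).fderiv_right (by norm_num)
        exact (this.differentiable one_ne_zero) w
      rw [fderiv_clm_apply hc (differentiableAt_const _)]
      simp
    calc ∑ m : Fin n, fderiv ℝ (fun u => (Φ u ν).2 m * (hamVF (q a) (Φ u ν)).1 m) w
          (Pi.single b 1)
        = ∑ m : Fin n, ((Φ w ν).2 m *
            (fderiv ℝ (fderiv ℝ (fun u => (Φ u ν).1 m)) w (Pi.single b 1)) (Pi.single a 1)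
            + (hamVF (q a) (Φ w ν)).1 m * (hamVF (q b) (Φ w ν)).2 m) := by
          refine Finset.sum_congr rfl fun m _ => ?_
          rw [e2 m, e3 m, fderiv_flow_snd hΦ m w b]
      _ = _ := by rw [Finset.sum_add_distrib]
  rw [key j i, key i j]
  have hsymm2 : ∀ m : Fin n,
      (fderiv ℝ (fderiv ℝ (fun u => (Φ u ν).1 m)) w (Pi.single i 1)) (Pi.single j 1)
      = (fderiv ℝ (fderiv ℝ (fun u => (Φ u ν).1 m)) w (Pi.single j 1)) (Pi.single i 1) := by
    intro m
    have hdiffX : ∀ x, HasFDerivAt (fun u => (Φ u ν).1 m)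
        (fderiv ℝ (fun u => (Φ u ν).1 m) x) x := fun x =>
      (((contDiff_X hΦ m).differentiable (by simp)) x).hasFDerivAt
    have hc : DifferentiableAt ℝ (fderiv ℝ (fun u' => (Φ u' ν).1 m)) w := by
      have : ContDiff ℝ 1 (fderiv ℝ (fun u' => (Φ u' ν).1 m)) :=
        ((contDiff_X hΦ m).of_le (by exact WithTop.coe_le_coe.2 le_top) : ContDiff ℝ 2 _).fderiv_right (by norm_num)
      exact (this.differentiable one_ne_zero) w
    exact second_derivative_symmetric hdiffX hc.hasFDerivAt (Pi.single i 1) (Pi.single j 1)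
  have h1 : (∑ m : Fin n, (Φ w ν).2 m *
      (fderiv ℝ (fderiv ℝ (fun u => (Φ u ν).1 m)) w (Pi.single i 1)) (Pi.single j 1))
      = ∑ m : Fin n, (Φ w ν).2 m *
      (fderiv ℝ (fderiv ℝ (fun u => (Φ u ν).1 m)) w (Pi.single j 1)) (Pi.single i 1) := by
    exact Finset.sum_congr rfl fun m _ => by rw [hsymm2 m]
  have h2 : (∑ m : Fin n, (hamVF (q j) (Φ w ν)).1 m * (hamVF (q i) (Φ w ν)).2 m)
      = ∑ m : Fin n, (hamVF (q i) (Φ w ν)).1 m * (hamVF (q j) (Φ w ν)).2 m := by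
    have hp := hcomm i j (Φ w ν)
    simp only [poisson] at hp
    rw [← sub_eq_zero]
    have hAB : (∑ m : Fin n, (hamVF (q j) (Φ w ν)).1 m * (hamVF (q i) (Φ w ν)).2 m)
        - (∑ m : Fin n, (hamVF (q i) (Φ w ν)).1 m * (hamVF (q j) (Φ w ν)).2 m)
        = ∑ m : Fin n,
          (fderiv ℝ (q i) (Φ w ν) (0, Pi.single m 1) * fderiv ℝ (q j) (Φ w ν) (Pi.single m 1, 0) -
           fderiv ℝ (q i) (Φ w ν) (Pi.single m 1, 0) * fderiv ℝ (q j) (Φ w ν) (0, Pi.single m 1)) := by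
      rw [← Finset.sum_sub_distrib]
      refine Finset.sum_congr rfl fun m _ => ?_
      simp only [hamVF]
      ring
    rw [hAB, hp]
  rw [h1, h2]

end pmap

section primitive

variable {K : ℕ} {p : (Fin K → ℝ) → Fin K → ℝ}

lemma fderiv_p_apply (hp : ∀ j, ContDiff ℝ 2 (fun w => p w j)) (j : Fin K)
    (w b : Fin K → ℝ) :
    fderiv ℝ (fun u => p u j) w b
      = ∑ i : Fin K, b i * fderiv ℝ (fun u => p u j) w (Pi.single i 1) := by
  have hb : b = ∑ i : Fin K, b i • (Pi.single i (1:ℝ) : Fin K → ℝ) := by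
    funext m
    rw [Finset.sum_apply]
    simp [Pi.single_apply]
  conv_lhs => rw [hb]
  rw [map_sum]
  exact Finset.sum_congr rfl fun i _ => by rw [map_smul]; rfl

lemma symm_vec (hp : ∀ j, ContDiff ℝ 2 (fun w => p w j))
    (hsymm : ∀ w i j, fderiv ℝ (fun u => p u j) w (Pi.single i 1)
      = fderiv ℝ (fun u => p u i) w (Pi.single j 1))
    (w a b : Fin K → ℝ) :
    ∑ j : Fin K, a j * fderiv ℝ (fun u => p u j) w b
      = ∑ j : Fin K, b j * fderiv ℝ (fun u => p u j) w a := by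
  have e : ∀ x y : Fin K → ℝ, ∑ j : Fin K, x j * fderiv ℝ (fun u => p u j) w y
      = ∑ j : Fin K, ∑ i : Fin K, x j * (y i * fderiv ℝ (fun u => p u j) w (Pi.single i 1)) := by
    intro x y
    refine Finset.sum_congr rfl fun j _ => ?_
    rw [fderiv_p_apply hp j w y, Finset.mul_sum]
  rw [e, e, Finset.sum_comm]
  refine Finset.sum_congr rfl fun j _ => Finset.sum_congr rfl fun i _ => ?_
  rw [hsymm w i j]
  ring

lemma hasDerivAt_P (hp : ∀ j, ContDiff ℝ 2 (fun w => p w j))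
    (hsymm : ∀ w i j, fderiv ℝ (fun u => p u j) w (Pi.single i 1)
      = fderiv ℝ (fun u => p u i) w (Pi.single j 1))
    (c v : Fin K → ℝ) (x₀ : ℝ) :
    HasDerivAt (fun x : ℝ => ∫ s in (0:ℝ)..1, ∑ j : Fin K, (c + x • v) j * p (s • (c + x • v)) j)
      (∑ j : Fin K, v j * p (c + x₀ • v) j) x₀ := by
  set h : ℝ → Fin K → ℝ := fun x => c + x • v with hh
  set D : ℝ → ℝ → ℝ := fun x s =>
    ∑ j : Fin K, (v j * p (s • h x) j
      + h x j * fderiv ℝ (fun u => p u j) (s • h x) (s • v)) with hD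
  have hdp : ∀ j (w : Fin K → ℝ), DifferentiableAt ℝ (fun u => p u j) w := fun j w =>
    ((hp j).differentiable (by norm_num)) w
  have hcontp : ∀ j, Continuous (fun w => p w j) := fun j => (hp j).continuous
  have hcontDp : ∀ j, Continuous (fderiv ℝ (fun u => p u j)) := fun j =>
    (((hp j).fderiv_right (le_refl _) : ContDiff ℝ 1 _).continuous)
  have hhx : ∀ x : ℝ, HasDerivAt h v x := by
    intro x
    simpa [hh] using ((hasDerivAt_id x).smul_const v).const_add c
  -- claim A
  have hA : ∀ (x s : ℝ), HasDerivAt (fun x' => ∑ j : Fin K, h x' j * p (s • h x') j) (D x s) x := by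
    intro x s
    apply HasDerivAt.fun_sum
    intro j _
    have h1 : HasDerivAt (fun x' => h x' j) (v j) x := by
      have : HasDerivAt (fun x' : ℝ => c j + x' * v j) (v j) x := by
        simpa using ((hasDerivAt_id x).mul_const (v j)).const_add (c j)
      exact this.congr_deriv rfl |>.congr_of_eventuallyEq (by
        filter_upwards with x'
        simp [hh, Pi.add_apply, Pi.smul_apply, smul_eq_mul])
    have h2 : HasDerivAt (fun x' => s • h x') (s • v) x := (hhx x).const_smul s
    have h3 : HasDerivAt (fun x' => p (s • h x') j)
        (fderiv ℝ (fun u => p u j) (s • h x) (s • v)) x :=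
      (hdp j (s • h x)).hasFDerivAt.comp_hasDerivAt (l := fun u => p u j) x h2
    simpa [mul_comm] using h1.fun_mul h3
  -- claim B
  have hB : ∀ (x s : ℝ), HasDerivAt (fun s' : ℝ => s' * ∑ j : Fin K, v j * p (s' • h x) j)
      (D x s) s := by
    intro x s
    have h2 : HasDerivAt (fun s' : ℝ => s' • h x) (h x) s := by
      simpa using (hasDerivAt_id s).smul_const (h x)
    have hw : HasDerivAt (fun s' : ℝ => ∑ j : Fin K, v j * p (s' • h x) j)
        (∑ j : Fin K, v j * fderiv ℝ (fun u => p u j) (s • h x) (h x)) s := by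
      apply HasDerivAt.fun_sum
      intro j _
      exact (((hdp j (s • h x)).hasFDerivAt.comp_hasDerivAt s h2)).const_mul (v j)
    have := (hasDerivAt_id s).fun_mul hw
    have heq : 1 * (∑ j : Fin K, v j * p (s • h x) j)
        + s * ∑ j : Fin K, v j * fderiv ℝ (fun u => p u j) (s • h x) (h x) = D x s := by
      simp only [hD]
      rw [Finset.sum_add_distrib]
      congr 1
      · ring_nf
      · rw [← symm_vec hp hsymm (s • h x) (h x) v]
        rw [Finset.mul_sum]
        refine Finset.sum_congr rfl fun j _ => ?_
        rw [map_smul]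
        simp [smul_eq_mul]
        ring
    rw [← heq]
    simpa using this
  -- continuity of D jointly
  have hDcont : Continuous (fun z : ℝ × ℝ => D z.1 z.2) := by
    apply continuous_finset_sum
    intro j _
    have hhc : Continuous (fun z : ℝ × ℝ => h z.1) := by
      apply Continuous.add continuous_const
      exact (continuous_fst.smul continuous_const)
    have hshc : Continuous (fun z : ℝ × ℝ => z.2 • h z.1) := continuous_snd.smul hhc
    apply Continuous.add
    · exact continuous_const.mul ((hcontp j).comp hshc)
    · apply Continuous.mul
      · exact (continuous_apply j).comp hhc
      · exact ((hcontDp j).comp hshc).clm_apply (continuous_snd.smul continuous_const)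
  -- bound
  obtain ⟨C, hC⟩ := (IsCompact.prod (isCompact_closedBall x₀ 1) isCompact_Icc).exists_bound_of_continuousOn
    (s := Metric.closedBall x₀ 1 ×ˢ Set.Icc (0:ℝ) 1) hDcont.continuousOn
  have key := intervalIntegral.hasDerivAt_integral_of_dominated_loc_of_deriv_le
    (F := fun x s => ∑ j : Fin K, h x j * p (s • h x) j) (F' := D) (x₀ := x₀)
    (a := 0) (b := 1) (μ := MeasureTheory.volume) (bound := fun _ => |C|) (s := Metric.ball x₀ 1) (Metric.ball_mem_nhds x₀ one_pos)
    ?_ ?_ ?_ ?_ ?_ ?_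
  · obtain ⟨_, hKey⟩ := key
    have hI : (∫ s in (0:ℝ)..1, D x₀ s) = ∑ j : Fin K, v j * p (c + x₀ • v) j := by
      have hcont : Continuous (D x₀) := hDcont.comp (continuous_const.prodMk continuous_id)
      rw [intervalIntegral.integral_eq_sub_of_hasDerivAt (fun s _ => hB x₀ s)
        (hcont.intervalIntegrable 0 1)]
      simp [hh]
    rw [hI] at hKey
    exact hKey
  · filter_upwards with x
    exact (Continuous.aestronglyMeasurable (by
      apply continuous_finset_sum
      intro j _
      exact continuous_const.mul ((hcontp j).comp (continuous_id.smul continuous_const)))).restrict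
  · apply Continuous.intervalIntegrable
    apply continuous_finset_sum
    intro j _
    exact continuous_const.mul ((hcontp j).comp (continuous_id.smul continuous_const))
  · exact (Continuous.aestronglyMeasurable
      (hDcont.comp (continuous_const.prodMk continuous_id))).restrict
  · filter_upwards with s hs x hx
    have hsmem : s ∈ Set.Icc (0:ℝ) 1 := by
      rw [Set.uIoc_of_le (by norm_num : (0:ℝ) ≤ 1)] at hs
      exact ⟨le_of_lt hs.1, hs.2⟩
    have := hC (x, s) ⟨Metric.ball_subset_closedBall hx, hsmem⟩
    calc ‖D x s‖ ≤ C := this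
      _ ≤ |C| := le_abs_self C
  · exact intervalIntegrable_const
  · filter_upwards with s hs x hx
    exact hA x s

end primitive

section assembly

variable {ν : (Fin n → ℝ) × (Fin n → ℝ)} {t : Fin k → ℝ}

lemma single_eq_smul (j : Fin k) (s : ℝ) :
    Pi.single j s = s • (Pi.single j 1 : Fin k → ℝ) := by
  funext i
  simp [Pi.single_apply, mul_ite]

variable (t) in
noncomputable def Wpt : ℕ → Fin k → ℝ := fun M =>
  ∑ i ∈ Finset.univ.filter (fun i : Fin k => (i : ℕ) < M), Pi.single i (t i)

lemma Wpt_zero : Wpt t 0 = 0 := by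
  simp [Wpt]

lemma Wpt_succ (j : Fin k) : Wpt t ((j : ℕ) + 1) = Pi.single j (t j) + Wpt t (j : ℕ) := by
  have hfil : Finset.univ.filter (fun i : Fin k => (i : ℕ) < (j : ℕ) + 1)
      = insert j (Finset.univ.filter (fun i : Fin k => (i : ℕ) < (j : ℕ))) := by
    ext i
    simp only [Finset.mem_filter, Finset.mem_univ, true_and, Finset.mem_insert]
    rw [Nat.lt_succ_iff_lt_or_eq]
    constructor
    · rintro (h | h)
      · exact Or.inr h
      · exact Or.inl (Fin.ext h)
    · rintro (h | h)
      · exact Or.inr (by rw [h])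
      · exact Or.inl h
  rw [Wpt, hfil, Finset.sum_insert (by simp)]
  rfl

lemma Wpt_last : Wpt t k = t := by
  rw [Wpt]
  rw [Finset.filter_true_of_mem (fun i _ => i.isLt)]
  exact Finset.univ_sum_single t

lemma nus_eq (hq : ∀ j, ContDiff ℝ (⊤ : ℕ∞) (q j)) (hΦ : IsJointFlow q Φ)
    {νs : ℕ → (Fin n → ℝ) × (Fin n → ℝ)} (hνs0 : νs 0 = ν)
    (hνsStep : ∀ j : Fin k, νs ((j : ℕ) + 1) = Φ (Pi.single j (t j)) (νs (j : ℕ))) :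
    ∀ m : ℕ, m ≤ k → νs m = Φ (Wpt t m) ν := by
  intro m
  induction m with
  | zero => intro _; rw [hνs0, Wpt_zero, hΦ.2.1]
  | succ m ih =>
    intro hm
    have hmk : m < k := Nat.lt_of_succ_le hm
    set j : Fin k := ⟨m, hmk⟩ with hj
    have hstep := hνsStep j
    simp only [hj] at hstep
    rw [hstep, ih (le_of_lt hmk), ← flow_add hq hΦ]
    have : Pi.single j (t j) + Wpt t m = Wpt t (m + 1) := by
      have := Wpt_succ (t := t) j
      simp only [hj] at this
      rw [this]
    rw [← this]

end assembly

end ActionDecompAux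

open ActionDecompAux

/-- The action of the path `s ∈ [0,1] ↦ Φ(st, ν)` decomposes as the sum of the
actions of the coordinate paths `s ∈ [0, t_j] ↦ Φ(s ε_j, ν_j)`, where `ν_1 = ν`
and `ν_{j+1} = Φ(t_j ε_j, ν_j)`. -/
theorem action_decomposition {n k : ℕ}
    (q : Fin k → (Fin n → ℝ) × (Fin n → ℝ) → ℝ)
    (hq : ∀ j, ContDiff ℝ (⊤ : ℕ∞) (q j))
    (hcomm : ∀ i j ν, poisson (q i) (q j) ν = 0)
    (Φ : (Fin k → ℝ) → (Fin n → ℝ) × (Fin n → ℝ) → (Fin n → ℝ) × (Fin n → ℝ))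
    (hΦ : IsJointFlow q Φ)
    (ν : (Fin n → ℝ) × (Fin n → ℝ)) (t : Fin k → ℝ)
    (νs : ℕ → (Fin n → ℝ) × (Fin n → ℝ))
    (hνs0 : νs 0 = ν)
    (hνsStep : ∀ j : Fin k, νs ((j : ℕ) + 1) = Φ (Pi.single j (t j)) (νs (j : ℕ))) :
    pathAction 0 1 (fun s => Φ (s • t) ν) =
      ∑ j : Fin k, pathAction 0 (t j) (fun s => Φ (Pi.single j s) (νs (j : ℕ))) := by
  classical
  have hp2 : ∀ j : Fin k, ContDiff ℝ 2 (fun w => pmap q Φ ν w j) := contDiff_pmap hq hΦ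
  have hsym : ∀ (w : Fin k → ℝ) (i j : Fin k),
      fderiv ℝ (fun u => pmap q Φ ν u j) w (Pi.single i 1)
        = fderiv ℝ (fun u => pmap q Φ ν u i) w (Pi.single j 1) := pmap_symm hq hcomm hΦ
  set P : (Fin k → ℝ) → ℝ :=
    fun w => ∫ s in (0:ℝ)..1, ∑ j : Fin k, w j * pmap q Φ ν (s • w) j with hP
  -- LHS
  have hderiv_diag : ∀ (s : ℝ) (m : Fin n),
      deriv (fun u : ℝ => (Φ (u • t) ν).1 m) s
        = ∑ j : Fin k, t j * (hamVF (q j) (Φ (s • t) ν)).1 m := by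
    intro s m
    have hcurve : HasDerivAt (fun u : ℝ => Φ (u • t) ν)
        (∑ j : Fin k, t j • hamVF (q j) (Φ (s • t) ν)) s := by
      apply hasDerivAt_flow_comp hΦ ν
      simpa using (hasDerivAt_id s).smul_const t
    have hL := (((ContinuousLinearMap.proj (R := ℝ) (φ := fun _ : Fin n => ℝ) m).comp
        (ContinuousLinearMap.fst ℝ (Fin n → ℝ) (Fin n → ℝ))).hasFDerivAt.comp_hasDerivAt
        s hcurve).deriv
    have hL' : deriv (fun u : ℝ => (Φ (u • t) ν).1 m) s
        = (∑ j : Fin k, t j • hamVF (q j) (Φ (s • t) ν)).1 m := hL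
    rw [hL', Prod.fst_sum, Finset.sum_apply]
    exact Finset.sum_congr rfl fun j _ => rfl
  have hLHS : pathAction 0 1 (fun s => Φ (s • t) ν) = P t := by
    rw [pathAction, hP]
    congr 1
    funext s
    calc ∑ m : Fin n, (Φ (s • t) ν).2 m * deriv (fun u : ℝ => (Φ (u • t) ν).1 m) s
        = ∑ m : Fin n, ∑ j : Fin k,
            t j * ((Φ (s • t) ν).2 m * (hamVF (q j) (Φ (s • t) ν)).1 m) := by
          refine Finset.sum_congr rfl fun m _ => ?_
          rw [hderiv_diag s m, Finset.mul_sum]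
          exact Finset.sum_congr rfl fun j _ => by ring
      _ = ∑ j : Fin k, t j * pmap q Φ ν (s • t) j := by
          rw [Finset.sum_comm]
          refine Finset.sum_congr rfl fun j _ => ?_
          rw [pmap, Finset.mul_sum]
  -- RHS pieces
  have hcurve_eq : ∀ j : Fin k, (fun s : ℝ => Φ (Pi.single j s) (νs (j : ℕ)))
      = fun s : ℝ => Φ (Wpt t (j : ℕ) + s • (Pi.single j 1 : Fin k → ℝ)) ν := by
    intro j
    funext s
    rw [nus_eq hq hΦ hνs0 hνsStep (j : ℕ) (le_of_lt j.isLt), ← flow_add hq hΦ, add_comm]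
    congr 1
    rw [single_eq_smul j s]
  have hderiv_seg : ∀ (j : Fin k) (s : ℝ) (m : Fin n),
      deriv (fun u : ℝ => (Φ (Wpt t (j : ℕ) + u • (Pi.single j 1 : Fin k → ℝ)) ν).1 m) s
        = (hamVF (q j) (Φ (Wpt t (j : ℕ) + s • (Pi.single j 1 : Fin k → ℝ)) ν)).1 m := by
    intro j s m
    have hc : HasDerivAt (fun u : ℝ => Wpt t (j : ℕ) + u • (Pi.single j 1 : Fin k → ℝ))
        (Pi.single j 1) s := by
      simpa using ((hasDerivAt_id s).smul_const (Pi.single j (1:ℝ) : Fin k → ℝ)).const_add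
        (Wpt t (j : ℕ))
    have hcurve := hasDerivAt_flow_comp hΦ ν hc
    have hcollapse : (∑ i : Fin k, (Pi.single j (1:ℝ) : Fin k → ℝ) i •
        hamVF (q i) (Φ (Wpt t (j : ℕ) + s • (Pi.single j 1 : Fin k → ℝ)) ν))
        = hamVF (q j) (Φ (Wpt t (j : ℕ) + s • (Pi.single j 1 : Fin k → ℝ)) ν) := by
      rw [Finset.sum_eq_single j]
      · simp
      · intro i _ hij
        simp [Pi.single_apply, hij]
      · simp
    rw [hcollapse] at hcurve
    have hL := (((ContinuousLinearMap.proj (R := ℝ) (φ := fun _ : Fin n => ℝ) m).comp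
        (ContinuousLinearMap.fst ℝ (Fin n → ℝ) (Fin n → ℝ))).hasFDerivAt.comp_hasDerivAt
        s hcurve).deriv
    exact hL
  have hseg : ∀ j : Fin k, pathAction 0 (t j) (fun s => Φ (Pi.single j s) (νs (j : ℕ)))
      = P (Wpt t ((j : ℕ) + 1)) - P (Wpt t (j : ℕ)) := by
    intro j
    rw [hcurve_eq j, pathAction]
    have hint_eq : (fun s : ℝ => ∑ m : Fin n,
        (Φ (Wpt t (j : ℕ) + s • (Pi.single j 1 : Fin k → ℝ)) ν).2 m *
          deriv (fun u : ℝ => (Φ (Wpt t (j : ℕ) + u • (Pi.single j 1 : Fin k → ℝ)) ν).1 m) s)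
        = fun s : ℝ => pmap q Φ ν (Wpt t (j : ℕ) + s • (Pi.single j 1 : Fin k → ℝ)) j := by
      funext s
      rw [pmap]
      exact Finset.sum_congr rfl fun m _ => by rw [hderiv_seg j s m]
    have hG : ∀ x : ℝ, HasDerivAt (fun x : ℝ => P (Wpt t (j : ℕ) + x • (Pi.single j 1 : Fin k → ℝ)))
        (pmap q Φ ν (Wpt t (j : ℕ) + x • (Pi.single j 1 : Fin k → ℝ)) j) x := by
      intro x
      have hder := hasDerivAt_P (p := pmap q Φ ν) hp2 hsym (Wpt t (j : ℕ))
        (Pi.single j 1) x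
      have hval : (∑ i : Fin k, (Pi.single j (1:ℝ) : Fin k → ℝ) i *
          pmap q Φ ν (Wpt t (j : ℕ) + x • (Pi.single j 1 : Fin k → ℝ)) i)
          = pmap q Φ ν (Wpt t (j : ℕ) + x • (Pi.single j 1 : Fin k → ℝ)) j := by
        rw [Finset.sum_eq_single j]
        · simp
        · intro i _ hij
          simp [Pi.single_apply, hij]
        · simp
      rw [hval] at hder
      exact hder
    have hcont : Continuous (fun s : ℝ => pmap q Φ ν (Wpt t (j : ℕ) + s • (Pi.single j 1 : Fin k → ℝ)) j) := by
      apply (hp2 j).continuous.comp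
      exact continuous_const.add (continuous_id.smul continuous_const)
    calc (∫ s in (0:ℝ)..(t j), ∑ m : Fin n,
          (Φ (Wpt t (j : ℕ) + s • (Pi.single j 1 : Fin k → ℝ)) ν).2 m *
            deriv (fun u : ℝ => (Φ (Wpt t (j : ℕ) + u • (Pi.single j 1 : Fin k → ℝ)) ν).1 m) s)
        = ∫ s in (0:ℝ)..(t j), pmap q Φ ν (Wpt t (j : ℕ) + s • (Pi.single j 1 : Fin k → ℝ)) j := by
          rw [hint_eq]
      _ = P (Wpt t (j : ℕ) + t j • (Pi.single j 1 : Fin k → ℝ)) - P (Wpt t (j : ℕ) + (0:ℝ) • (Pi.single j 1 : Fin k → ℝ)) := by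
          exact intervalIntegral.integral_eq_sub_of_hasDerivAt (fun s _ => hG s)
            (hcont.intervalIntegrable 0 (t j))
      _ = P (Wpt t ((j : ℕ) + 1)) - P (Wpt t (j : ℕ)) := by
          rw [← single_eq_smul j (t j), Wpt_succ j,
            add_comm (Pi.single j (t j)) (Wpt t (j : ℕ))]
          simp
  -- telescoping
  have hP0 : P 0 = 0 := by
    rw [hP]
    simp
  rw [hLHS]
  calc P t = ∑ j : Fin k, (P (Wpt t ((j : ℕ) + 1)) - P (Wpt t (j : ℕ))) := by
        rw [Fin.sum_univ_eq_sum_range (fun m => P (Wpt t (m + 1)) - P (Wpt t m)) k,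
          Finset.sum_range_sub (fun m => P (Wpt t m)), Wpt_last, Wpt_zero, hP0, sub_zero]
    _ = ∑ j : Fin k, pathAction 0 (t j) (fun s => Φ (Pi.single j s) (νs (j : ℕ))) :=
        Finset.sum_congr rfl fun j _ => (hseg j).symm
end
end

section
/- Let h > 0, let W : ℝ → ℝ be smooth, and define V : ℝ³ → ℝ by V(x) = W(x₁² + x₂² + x₃²). For smooth f : ℝ³ → ℂ define (A₁ f)(x) = −h²(∂₁²f + ∂₂²f + ∂₃²f)(x) + V(x)·f(x), the first-order operators (D₁ f)(x) = x₂ ∂₃ f(x) − x₃ ∂₂ f(x), (D₂ f)(x) = x₃ ∂₁ f(x) − x₁ ∂₃ f(x), (D₃ f)(x) = x₁ ∂₂ f(x) − x₂ ∂₁ f(x), and A₃ = −h²(D₁∘D₁ + D₂∘D₂ + D₃∘D₃). Then A₁ and A₃ commute on smooth functions: A₁(A₃ f) = A₃(A₁ f) for every smooth f : ℝ³ → ℂ. -/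
noncomputable section

/-- Partial derivative in the `j`-th coordinate of a function on `ℝ³`. -/
def pd (j : Fin 3) (f : (Fin 3 → ℝ) → ℂ) : (Fin 3 → ℝ) → ℂ :=
  fun x => fderiv ℝ f x (Pi.single j 1)

namespace SchAux

abbrev E3 := Fin 3 → ℝ

lemma contDiff_pd {f : E3 → ℂ} (hf : ContDiff ℝ (⊤ : ℕ∞) f) (j : Fin 3) :
    ContDiff ℝ (⊤ : ℕ∞) (pd j f) :=
  (hf.fderiv_right (by simp)).clm_apply contDiff_const

lemma diff_pd {f : E3 → ℂ} (hf : ContDiff ℝ (⊤ : ℕ∞) f) (j : Fin 3) :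
    Differentiable ℝ (pd j f) :=
  (contDiff_pd hf j).differentiable (by simp)

lemma pd_comm {f : E3 → ℂ} (hf : ContDiff ℝ (⊤ : ℕ∞) f) (i j : Fin 3) :
    pd i (pd j f) = pd j (pd i f) := by
  funext x
  have hdf : Differentiable ℝ (fderiv ℝ f) :=
    (hf.fderiv_right (m := (⊤ : ℕ∞)) (by simp)).differentiable (by simp)
  have key : ∀ u v : E3,
      fderiv ℝ (fun y => fderiv ℝ f y u) x v = fderiv ℝ (fderiv ℝ f) x v u := by
    intro u v
    rw [fderiv_clm_apply (hdf x) (differentiableAt_const u)]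
    simp
  have hsymm := ((hf.contDiffAt (x := x)).isSymmSndFDerivAt (by rw [minSmoothness_of_isRCLikeNormedField]; exact WithTop.coe_le_coe.mpr (le_top : (2 : ℕ∞) ≤ ⊤))) (Pi.single i 1) (Pi.single j 1)
  show fderiv ℝ (fun y => fderiv ℝ f y (Pi.single j 1)) x (Pi.single i 1)
      = fderiv ℝ (fun y => fderiv ℝ f y (Pi.single i 1)) x (Pi.single j 1)
  rw [key, key]
  exact hsymm

lemma pd_add {g1 g2 : E3 → ℂ} {x : E3} (h1 : DifferentiableAt ℝ g1 x)
    (h2 : DifferentiableAt ℝ g2 x) (j : Fin 3) :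
    pd j (fun y => g1 y + g2 y) x = pd j g1 x + pd j g2 x := by
  simp [pd, fderiv_fun_add h1 h2]

lemma pd_sub {g1 g2 : E3 → ℂ} {x : E3} (h1 : DifferentiableAt ℝ g1 x)
    (h2 : DifferentiableAt ℝ g2 x) (j : Fin 3) :
    pd j (fun y => g1 y - g2 y) x = pd j g1 x - pd j g2 x := by
  simp [pd, fderiv_fun_sub h1 h2]

lemma pd_const_mul {g : E3 → ℂ} {x : E3} (hg : DifferentiableAt ℝ g x) (c : ℂ) (j : Fin 3) :
    pd j (fun y => c * g y) x = c * pd j g x := by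
  simp [pd, fderiv_const_mul hg c]

def cL (i : Fin 3) : E3 →L[ℝ] ℂ :=
  Complex.ofRealCLM.comp (ContinuousLinearMap.proj i)

lemma hasFDerivAt_cf (i : Fin 3) (x : E3) :
    HasFDerivAt (fun y : E3 => ((y i : ℝ) : ℂ)) (cL i) x := (cL i).hasFDerivAt

lemma contDiff_coord (i : Fin 3) : ContDiff ℝ (⊤ : ℕ∞) (fun y : E3 => ((y i : ℝ) : ℂ)) :=
  (cL i).contDiff

lemma pd_coord_mul {g : E3 → ℂ} {x : E3} (hg : DifferentiableAt ℝ g x) (i j : Fin 3) :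
    pd j (fun y => (y i : ℂ) * g y) x
      = (if j = i then 1 else 0) * g x + (x i : ℂ) * pd j g x := by
  have hc : DifferentiableAt ℝ (fun y : E3 => ((y i : ℝ) : ℂ)) x :=
    (hasFDerivAt_cf i x).differentiableAt
  simp only [pd, fderiv_fun_mul hc hg, (hasFDerivAt_cf i x).fderiv,
    ContinuousLinearMap.add_apply, ContinuousLinearMap.coe_smul', Pi.smul_apply,
    smul_eq_mul]
  simp only [cL, ContinuousLinearMap.comp_apply, ContinuousLinearMap.proj_apply,
    Pi.single_apply, Complex.ofRealCLM_apply]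
  rcases eq_or_ne j i with hji | hji
  · simp [hji]; ring
  · simp [hji, Ne.symm hji]

end SchAux

namespace SchAux

def lap (g : E3 → ℂ) : E3 → ℂ :=
  fun x => pd 0 (pd 0 g) x + pd 1 (pd 1 g) x + pd 2 (pd 2 g) x

def Dop (a b : Fin 3) (g : E3 → ℂ) : E3 → ℂ :=
  fun x => (x a : ℂ) * pd b g x - (x b : ℂ) * pd a g x

lemma contDiff_lap {g : E3 → ℂ} (hg : ContDiff ℝ (⊤ : ℕ∞) g) : ContDiff ℝ (⊤ : ℕ∞) (lap g) :=
  ((contDiff_pd (contDiff_pd hg 0) 0).add (contDiff_pd (contDiff_pd hg 1) 1)).add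
    (contDiff_pd (contDiff_pd hg 2) 2)

lemma contDiff_Dop {g : E3 → ℂ} (hg : ContDiff ℝ (⊤ : ℕ∞) g) (a b : Fin 3) :
    ContDiff ℝ (⊤ : ℕ∞) (Dop a b g) :=
  ((contDiff_coord a).mul (contDiff_pd hg b)).sub
    ((contDiff_coord b).mul (contDiff_pd hg a))

lemma pd_Dop {g : E3 → ℂ} (hg : ContDiff ℝ (⊤ : ℕ∞) g) (a b j : Fin 3) :
    pd j (Dop a b g)
      = fun x => ((if j = a then 1 else 0) * pd b g x - (if j = b then 1 else 0) * pd a g x)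
        + ((x a : ℂ) * pd j (pd b g) x - (x b : ℂ) * pd j (pd a g) x) := by
  funext x
  have h1 : DifferentiableAt ℝ (fun y : E3 => (y a : ℂ) * pd b g y) x :=
    (((contDiff_coord a).mul (contDiff_pd hg b)).differentiable (by simp)).differentiableAt
  have h2 : DifferentiableAt ℝ (fun y : E3 => (y b : ℂ) * pd a g y) x :=
    (((contDiff_coord b).mul (contDiff_pd hg a)).differentiable (by simp)).differentiableAt
  have : pd j (Dop a b g) x
      = pd j (fun y => (y a : ℂ) * pd b g y) x - pd j (fun y => (y b : ℂ) * pd a g y) x :=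
    pd_sub h1 h2 j
  rw [this, pd_coord_mul ((diff_pd hg b) x) a j, pd_coord_mul ((diff_pd hg a) x) b j]
  ring

lemma sum_delta (a : Fin 3) (T : Fin 3 → ℂ) :
    (if (0 : Fin 3) = a then (1 : ℂ) else 0) * T 0
      + (if (1 : Fin 3) = a then (1 : ℂ) else 0) * T 1
      + (if (2 : Fin 3) = a then (1 : ℂ) else 0) * T 2 = T a := by
  fin_cases a <;> simp

lemma lap_Dop {g : E3 → ℂ} (hg : ContDiff ℝ (⊤ : ℕ∞) g) (a b : Fin 3) :
    lap (Dop a b g) = Dop a b (lap g) := by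
  have e1 : ∀ j : Fin 3, ∀ x : E3, pd j (pd j (Dop a b g)) x
      = 2 * (if j = a then 1 else 0) * pd j (pd b g) x
        - 2 * (if j = b then 1 else 0) * pd j (pd a g) x
        + ((x a : ℂ) * pd j (pd j (pd b g)) x - (x b : ℂ) * pd j (pd j (pd a g)) x) := by
    intro j x
    rw [pd_Dop hg a b j]
    have hc1 : DifferentiableAt ℝ
        (fun y : E3 => (if j = a then (1:ℂ) else 0) * pd b g y) x :=
      ((diff_pd hg b).const_mul _).differentiableAt
    have hc2 : DifferentiableAt ℝ
        (fun y : E3 => (if j = b then (1:ℂ) else 0) * pd a g y) x :=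
      ((diff_pd hg a).const_mul _).differentiableAt
    have hm1 : DifferentiableAt ℝ (fun y : E3 => (y a : ℂ) * pd j (pd b g) y) x :=
      (((contDiff_coord a).mul (contDiff_pd (contDiff_pd hg b) j)).differentiable
        (by simp)).differentiableAt
    have hm2 : DifferentiableAt ℝ (fun y : E3 => (y b : ℂ) * pd j (pd a g) y) x :=
      (((contDiff_coord b).mul (contDiff_pd (contDiff_pd hg a) j)).differentiable
        (by simp)).differentiableAt
    rw [pd_add (hc1.fun_sub hc2) (hm1.fun_sub hm2) j, pd_sub hc1 hc2 j, pd_sub hm1 hm2 j,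
      pd_const_mul ((diff_pd hg b) x) _ j,
      pd_const_mul ((diff_pd hg a) x) _ j,
      pd_coord_mul ((diff_pd (contDiff_pd hg b) j) x) a j,
      pd_coord_mul ((diff_pd (contDiff_pd hg a) j) x) b j]
    ring
  have swap : ∀ c j : Fin 3, pd c (pd j (pd j g)) = pd j (pd j (pd c g)) := by
    intro c j
    calc pd c (pd j (pd j g)) = pd j (pd c (pd j g)) := pd_comm (contDiff_pd hg j) c j
      _ = pd j (pd j (pd c g)) := congrArg (pd j) (pd_comm hg c j)
  funext x
  have e2 : ∀ c : Fin 3, pd c (lap g) x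
      = pd 0 (pd 0 (pd c g)) x + pd 1 (pd 1 (pd c g)) x + pd 2 (pd 2 (pd c g)) x := by
    intro c
    have hd : ∀ j : Fin 3, DifferentiableAt ℝ (pd j (pd j g)) x := fun j =>
      (diff_pd (contDiff_pd hg j) j).differentiableAt
    have : pd c (lap g) x
        = pd c (fun y => pd 0 (pd 0 g) y + pd 1 (pd 1 g) y) x + pd c (pd 2 (pd 2 g)) x :=
      pd_add ((hd 0).add (hd 1)) (hd 2) c
    rw [show lap g = fun y => (pd 0 (pd 0 g) y + pd 1 (pd 1 g) y) + pd 2 (pd 2 g) y from rfl,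
      pd_add (g1 := fun y => pd 0 (pd 0 g) y + pd 1 (pd 1 g) y) ((hd 0).add (hd 1)) (hd 2) c,
      pd_add (hd 0) (hd 1) c,
      swap c 0, swap c 1, swap c 2]
  show pd 0 (pd 0 (Dop a b g)) x + pd 1 (pd 1 (Dop a b g)) x + pd 2 (pd 2 (Dop a b g)) x
      = (x a : ℂ) * pd b (lap g) x - (x b : ℂ) * pd a (lap g) x
  rw [e1 0 x, e1 1 x, e1 2 x, e2 a, e2 b]
  have hda := sum_delta a (fun j => pd j (pd b g) x)
  have hdb := sum_delta b (fun j => pd j (pd a g) x)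
  have hcomm : pd a (pd b g) x = pd b (pd a g) x := congrFun (pd_comm hg a b) x
  linear_combination 2 * hda - 2 * hdb + 2 * hcomm

end SchAux

namespace SchAux

def prj (i : Fin 3) : E3 →L[ℝ] ℝ := ContinuousLinearMap.proj i

def NR : E3 → ℝ := fun y => y 0 ^ 2 + y 1 ^ 2 + y 2 ^ 2

variable {W : ℝ → ℝ}

lemma contDiff_NR : ContDiff ℝ (⊤ : ℕ∞) NR := by
  have hp : ∀ i : Fin 3, ContDiff ℝ (⊤ : ℕ∞) (fun y : E3 => y i) := fun i =>
    (prj i).contDiff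
  exact (((hp 0).pow 2).add ((hp 1).pow 2)).add ((hp 2).pow 2)

lemma contDiff_VC (hW : ContDiff ℝ (⊤ : ℕ∞) W) :
    ContDiff ℝ (⊤ : ℕ∞) (fun y : E3 => ((W (NR y) : ℝ) : ℂ)) :=
  Complex.ofRealCLM.contDiff.comp (hW.comp contDiff_NR)

lemma hasFDerivAt_VC (hW : ContDiff ℝ (⊤ : ℕ∞) W) (x : E3) :
    HasFDerivAt (fun y : E3 => ((W (NR y) : ℝ) : ℂ))
      (Complex.ofRealCLM.comp (deriv W (NR x) •
        ((2 * x 0) • prj 0 + (2 * x 1) • prj 1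
          + (2 * x 2) • prj 2 : E3 →L[ℝ] ℝ))) x := by
  have h0 : ∀ i : Fin 3, HasFDerivAt (fun y : E3 => y i ^ 2)
      ((2 * x i) • prj i) x := by
    intro i
    have hp : HasFDerivAt (fun y : E3 => y i)
        (prj i) x :=
      (prj i).hasFDerivAt
    have hm := hp.mul hp
    have hfun : (fun y : E3 => y i ^ 2) = fun y : E3 => y i * y i := by
      funext y; rw [sq]
    have hder : (2 * x i) • prj i
        = x i • prj i + x i • prj i := by
      rw [two_mul, add_smul]
    rw [hfun, hder]
    exact hm
  have hN : HasFDerivAt NR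
      ((2 * x 0) • prj 0 + (2 * x 1) • prj 1
        + (2 * x 2) • prj 2 : E3 →L[ℝ] ℝ) x :=
    ((h0 0).add (h0 1)).add (h0 2)
  have hW' : HasDerivAt W (deriv W (NR x)) (NR x) :=
    ((hW.differentiable (by simp)) (NR x)).hasDerivAt
  have hcomp := hW'.comp_hasFDerivAt x hN
  exact Complex.ofRealCLM.hasFDerivAt.comp x hcomp

lemma pd_VC (hW : ContDiff ℝ (⊤ : ℕ∞) W) (x : E3) (j : Fin 3) :
    pd j (fun y : E3 => ((W (NR y) : ℝ) : ℂ)) x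
      = ((2 * deriv W (NR x) * x j : ℝ) : ℂ) := by
  show fderiv ℝ _ x (Pi.single j 1) = _
  rw [(hasFDerivAt_VC hW x).fderiv]
  fin_cases j <;>
    simp [prj, Pi.single_apply] <;> ring

lemma pd_VC_mul (hW : ContDiff ℝ (⊤ : ℕ∞) W) {f : E3 → ℂ} {x : E3}
    (hfd : DifferentiableAt ℝ f x) (j : Fin 3) :
    pd j (fun y => ((W (NR y) : ℝ) : ℂ) * f y) x
      = ((2 * deriv W (NR x) * x j : ℝ) : ℂ) * f x
        + ((W (NR x) : ℝ) : ℂ) * pd j f x := by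
  have hc : DifferentiableAt ℝ (fun y : E3 => ((W (NR y) : ℝ) : ℂ)) x :=
    (hasFDerivAt_VC hW x).differentiableAt
  simp only [pd, fderiv_fun_mul hc hfd, ContinuousLinearMap.add_apply,
    ContinuousLinearMap.coe_smul', Pi.smul_apply, smul_eq_mul]
  rw [show fderiv ℝ (fun y : E3 => ((W (NR y) : ℝ) : ℂ)) x (Pi.single j 1)
      = ((2 * deriv W (NR x) * x j : ℝ) : ℂ) from pd_VC hW x j]
  ring

lemma Dop_radial (hW : ContDiff ℝ (⊤ : ℕ∞) W) {f : E3 → ℂ} (hf : ContDiff ℝ (⊤ : ℕ∞) f) (a b : Fin 3) :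
    Dop a b (fun y => ((W (NR y) : ℝ) : ℂ) * f y)
      = fun x => ((W (NR x) : ℝ) : ℂ) * Dop a b f x := by
  funext x
  show (x a : ℂ) * pd b (fun y => ((W (NR y) : ℝ) : ℂ) * f y) x
      - (x b : ℂ) * pd a (fun y => ((W (NR y) : ℝ) : ℂ) * f y) x
    = ((W (NR x) : ℝ) : ℂ) * ((x a : ℂ) * pd b f x - (x b : ℂ) * pd a f x)
  rw [pd_VC_mul hW (hf.differentiable (by simp)).differentiableAt b,
    pd_VC_mul hW (hf.differentiable (by simp)).differentiableAt a]
  push_cast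
  ring

end SchAux

namespace SchAux

variable {W : ℝ → ℝ}

lemma Dop_add {g1 g2 : E3 → ℂ} (h1 : ContDiff ℝ (⊤ : ℕ∞) g1) (h2 : ContDiff ℝ (⊤ : ℕ∞) g2) (a b : Fin 3) :
    Dop a b (fun y => g1 y + g2 y) = fun x => Dop a b g1 x + Dop a b g2 x := by
  funext x
  show (x a : ℂ) * pd b (fun y => g1 y + g2 y) x - (x b : ℂ) * pd a (fun y => g1 y + g2 y) x = _
  rw [pd_add ((h1.differentiable (by simp)) x) ((h2.differentiable (by simp)) x) b,
    pd_add ((h1.differentiable (by simp)) x) ((h2.differentiable (by simp)) x) a]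
  show _ = (x a : ℂ) * pd b g1 x - (x b : ℂ) * pd a g1 x
    + ((x a : ℂ) * pd b g2 x - (x b : ℂ) * pd a g2 x)
  ring

lemma Dop_const_mul {g : E3 → ℂ} (hg : ContDiff ℝ (⊤ : ℕ∞) g) (c : ℂ) (a b : Fin 3) :
    Dop a b (fun y => c * g y) = fun x => c * Dop a b g x := by
  funext x
  show (x a : ℂ) * pd b (fun y => c * g y) x - (x b : ℂ) * pd a (fun y => c * g y) x = _
  rw [pd_const_mul ((hg.differentiable (by simp)) x) c b,
    pd_const_mul ((hg.differentiable (by simp)) x) c a]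
  show _ = c * ((x a : ℂ) * pd b g x - (x b : ℂ) * pd a g x)
  ring

lemma lap_add {g1 g2 : E3 → ℂ} (h1 : ContDiff ℝ (⊤ : ℕ∞) g1) (h2 : ContDiff ℝ (⊤ : ℕ∞) g2) :
    lap (fun y => g1 y + g2 y) = fun x => lap g1 x + lap g2 x := by
  have hp : ∀ j : Fin 3, pd j (fun y => g1 y + g2 y) = fun y => pd j g1 y + pd j g2 y :=
    fun j => funext fun y =>
      pd_add ((h1.differentiable (by simp)) y) ((h2.differentiable (by simp)) y) j
  funext x
  show pd 0 (pd 0 (fun y => g1 y + g2 y)) x + pd 1 (pd 1 (fun y => g1 y + g2 y)) x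
      + pd 2 (pd 2 (fun y => g1 y + g2 y)) x = _
  rw [hp 0, hp 1, hp 2,
    pd_add ((diff_pd h1 0) x) ((diff_pd h2 0) x) 0,
    pd_add ((diff_pd h1 1) x) ((diff_pd h2 1) x) 1,
    pd_add ((diff_pd h1 2) x) ((diff_pd h2 2) x) 2]
  show _ = pd 0 (pd 0 g1) x + pd 1 (pd 1 g1) x + pd 2 (pd 2 g1) x
    + (pd 0 (pd 0 g2) x + pd 1 (pd 1 g2) x + pd 2 (pd 2 g2) x)
  ring

lemma lap_const_mul {g : E3 → ℂ} (hg : ContDiff ℝ (⊤ : ℕ∞) g) (c : ℂ) :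
    lap (fun y => c * g y) = fun x => c * lap g x := by
  have hp : ∀ j : Fin 3, pd j (fun y => c * g y) = fun y => c * pd j g y :=
    fun j => funext fun y => pd_const_mul ((hg.differentiable (by simp)) y) c j
  funext x
  show pd 0 (pd 0 (fun y => c * g y)) x + pd 1 (pd 1 (fun y => c * g y)) x
      + pd 2 (pd 2 (fun y => c * g y)) x = _
  rw [hp 0, hp 1, hp 2,
    pd_const_mul ((diff_pd hg 0) x) c 0,
    pd_const_mul ((diff_pd hg 1) x) c 1,
    pd_const_mul ((diff_pd hg 2) x) c 2]
  show _ = c * (pd 0 (pd 0 g) x + pd 1 (pd 1 g) x + pd 2 (pd 2 g) x)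
  ring

def Top (g : E3 → ℂ) : E3 → ℂ :=
  fun x => Dop 1 2 (Dop 1 2 g) x + Dop 2 0 (Dop 2 0 g) x + Dop 0 1 (Dop 0 1 g) x

lemma contDiff_Top {g : E3 → ℂ} (hg : ContDiff ℝ (⊤ : ℕ∞) g) : ContDiff ℝ (⊤ : ℕ∞) (Top g) :=
  ((contDiff_Dop (contDiff_Dop hg 1 2) 1 2).add (contDiff_Dop (contDiff_Dop hg 2 0) 2 0)).add
    (contDiff_Dop (contDiff_Dop hg 0 1) 0 1)

lemma lap_Top {g : E3 → ℂ} (hg : ContDiff ℝ (⊤ : ℕ∞) g) : lap (Top g) = Top (lap g) := by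
  have hterm : ∀ a b : Fin 3, lap (Dop a b (Dop a b g)) = Dop a b (Dop a b (lap g)) := by
    intro a b
    rw [lap_Dop (contDiff_Dop hg a b) a b, lap_Dop hg a b]
  have h12 : ContDiff ℝ (⊤ : ℕ∞) (Dop 1 2 (Dop 1 2 g)) := contDiff_Dop (contDiff_Dop hg 1 2) 1 2
  have h20 : ContDiff ℝ (⊤ : ℕ∞) (Dop 2 0 (Dop 2 0 g)) := contDiff_Dop (contDiff_Dop hg 2 0) 2 0
  have h01 : ContDiff ℝ (⊤ : ℕ∞) (Dop 0 1 (Dop 0 1 g)) := contDiff_Dop (contDiff_Dop hg 0 1) 0 1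
  have e : Top g = fun y => (fun z => Dop 1 2 (Dop 1 2 g) z + Dop 2 0 (Dop 2 0 g) z) y
      + Dop 0 1 (Dop 0 1 g) y := rfl
  rw [e, lap_add (h12.add h20) h01, lap_add h12 h20]
  funext x
  show lap (Dop 1 2 (Dop 1 2 g)) x + lap (Dop 2 0 (Dop 2 0 g)) x
      + lap (Dop 0 1 (Dop 0 1 g)) x = Top (lap g) x
  rw [congrFun (hterm 1 2) x, congrFun (hterm 2 0) x, congrFun (hterm 0 1) x]
  rfl

lemma Top_add {g1 g2 : E3 → ℂ} (h1 : ContDiff ℝ (⊤ : ℕ∞) g1) (h2 : ContDiff ℝ (⊤ : ℕ∞) g2) :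
    Top (fun y => g1 y + g2 y) = fun x => Top g1 x + Top g2 x := by
  have hterm : ∀ a b : Fin 3, Dop a b (Dop a b (fun y => g1 y + g2 y))
      = fun x => Dop a b (Dop a b g1) x + Dop a b (Dop a b g2) x := by
    intro a b
    rw [Dop_add h1 h2 a b, Dop_add (contDiff_Dop h1 a b) (contDiff_Dop h2 a b) a b]
  funext x
  show Dop 1 2 (Dop 1 2 (fun y => g1 y + g2 y)) x + Dop 2 0 (Dop 2 0 (fun y => g1 y + g2 y)) x
      + Dop 0 1 (Dop 0 1 (fun y => g1 y + g2 y)) x = _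
  rw [congrFun (hterm 1 2) x, congrFun (hterm 2 0) x, congrFun (hterm 0 1) x]
  show _ = Dop 1 2 (Dop 1 2 g1) x + Dop 2 0 (Dop 2 0 g1) x + Dop 0 1 (Dop 0 1 g1) x
    + (Dop 1 2 (Dop 1 2 g2) x + Dop 2 0 (Dop 2 0 g2) x + Dop 0 1 (Dop 0 1 g2) x)
  ring

lemma Top_const_mul {g : E3 → ℂ} (hg : ContDiff ℝ (⊤ : ℕ∞) g) (c : ℂ) :
    Top (fun y => c * g y) = fun x => c * Top g x := by
  have hterm : ∀ a b : Fin 3, Dop a b (Dop a b (fun y => c * g y))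
      = fun x => c * Dop a b (Dop a b g) x := by
    intro a b
    rw [Dop_const_mul hg c a b, Dop_const_mul (contDiff_Dop hg a b) c a b]
  funext x
  show Dop 1 2 (Dop 1 2 (fun y => c * g y)) x + Dop 2 0 (Dop 2 0 (fun y => c * g y)) x
      + Dop 0 1 (Dop 0 1 (fun y => c * g y)) x = _
  rw [congrFun (hterm 1 2) x, congrFun (hterm 2 0) x, congrFun (hterm 0 1) x]
  show _ = c * (Dop 1 2 (Dop 1 2 g) x + Dop 2 0 (Dop 2 0 g) x + Dop 0 1 (Dop 0 1 g) x)
  ring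

lemma Top_radial (hW : ContDiff ℝ (⊤ : ℕ∞) W) {f : E3 → ℂ} (hf : ContDiff ℝ (⊤ : ℕ∞) f) :
    Top (fun y => ((W (NR y) : ℝ) : ℂ) * f y)
      = fun x => ((W (NR x) : ℝ) : ℂ) * Top f x := by
  have hterm : ∀ a b : Fin 3, Dop a b (Dop a b (fun y => ((W (NR y) : ℝ) : ℂ) * f y))
      = fun x => ((W (NR x) : ℝ) : ℂ) * Dop a b (Dop a b f) x := by
    intro a b
    rw [Dop_radial hW hf a b, Dop_radial hW (contDiff_Dop hf a b) a b]
  funext x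
  show Dop 1 2 (Dop 1 2 (fun y => ((W (NR y) : ℝ) : ℂ) * f y)) x
      + Dop 2 0 (Dop 2 0 (fun y => ((W (NR y) : ℝ) : ℂ) * f y)) x
      + Dop 0 1 (Dop 0 1 (fun y => ((W (NR y) : ℝ) : ℂ) * f y)) x = _
  rw [congrFun (hterm 1 2) x, congrFun (hterm 2 0) x, congrFun (hterm 0 1) x]
  show _ = ((W (NR x) : ℝ) : ℂ)
      * (Dop 1 2 (Dop 1 2 f) x + Dop 2 0 (Dop 2 0 f) x + Dop 0 1 (Dop 0 1 f) x)
  ring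

end SchAux

open SchAux in
/-- The semiclassical Schrödinger operator `A₁ = −h²Δ + V` with spherically
symmetric potential `V(x) = W(‖x‖²)` commutes with the total angular momentum
squared `A₃ = −h²(D₁² + D₂² + D₃²)` on smooth functions, where
`D₁ = x₂∂₃ − x₃∂₂`, `D₂ = x₃∂₁ − x₁∂₃`, `D₃ = x₁∂₂ − x₂∂₁`. -/
theorem schrodinger_commutes_total_angular_momentum (h : ℝ) (hh : 0 < h)
    (W : ℝ → ℝ) (hW : ContDiff ℝ (⊤ : ℕ∞) W)
    (V : (Fin 3 → ℝ) → ℝ)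
    (hV : ∀ x, V x = W (x 0 ^ 2 + x 1 ^ 2 + x 2 ^ 2))
    (D₁ D₂ D₃ A₁ A₃ : ((Fin 3 → ℝ) → ℂ) → (Fin 3 → ℝ) → ℂ)
    (hA₁ : ∀ f x, A₁ f x =
      -(h : ℂ) ^ 2 * (pd 0 (pd 0 f) x + pd 1 (pd 1 f) x + pd 2 (pd 2 f) x)
        + (V x : ℂ) * f x)
    (hD₁ : ∀ f x, D₁ f x = (x 1 : ℂ) * pd 2 f x - (x 2 : ℂ) * pd 1 f x)
    (hD₂ : ∀ f x, D₂ f x = (x 2 : ℂ) * pd 0 f x - (x 0 : ℂ) * pd 2 f x)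
    (hD₃ : ∀ f x, D₃ f x = (x 0 : ℂ) * pd 1 f x - (x 1 : ℂ) * pd 0 f x)
    (hA₃ : ∀ f x, A₃ f x =
      -(h : ℂ) ^ 2 * (D₁ (D₁ f) x + D₂ (D₂ f) x + D₃ (D₃ f) x)) :
    ∀ f : (Fin 3 → ℝ) → ℂ, ContDiff ℝ (⊤ : ℕ∞) f → A₁ (A₃ f) = A₃ (A₁ f) := by
  intro f hf
  have hD1f : ∀ g, D₁ g = Dop 1 2 g := fun g => funext fun x => by rw [hD₁]; rfl
  have hD2f : ∀ g, D₂ g = Dop 2 0 g := fun g => funext fun x => by rw [hD₂]; rfl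
  have hD3f : ∀ g, D₃ g = Dop 0 1 g := fun g => funext fun x => by rw [hD₃]; rfl
  have hA3f : ∀ g, A₃ g = fun x => -(h : ℂ) ^ 2 * Top g x := by
    intro g
    funext x
    show A₃ g x = -(h : ℂ) ^ 2 * Top g x
    rw [hA₃, hD1f, hD1f, hD2f, hD2f, hD3f, hD3f]
    rfl
  have hVC : ∀ x : Fin 3 → ℝ, (V x : ℂ) = ((W (NR x) : ℝ) : ℂ) := fun x => by rw [hV]; rfl
  have hA1f : ∀ g, A₁ g
      = fun x => -(h : ℂ) ^ 2 * lap g x + ((W (NR x) : ℝ) : ℂ) * g x := by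
    intro g
    funext x
    show A₁ g x = -(h : ℂ) ^ 2 * lap g x + ((W (NR x) : ℝ) : ℂ) * g x
    rw [hA₁, hVC]
    rfl
  have hTopf : ContDiff ℝ (⊤ : ℕ∞) (Top f) := contDiff_Top hf
  have hlapf : ContDiff ℝ (⊤ : ℕ∞) (lap f) := contDiff_lap hf
  rw [hA3f f, hA1f f, hA1f, hA3f]
  funext x
  have e1 : lap (fun y => -(h : ℂ) ^ 2 * Top f y) x = -(h : ℂ) ^ 2 * Top (lap f) x := by
    calc lap (fun y => -(h : ℂ) ^ 2 * Top f y) x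
        = -(h : ℂ) ^ 2 * lap (Top f) x := congrFun (lap_const_mul hTopf _) x
      _ = -(h : ℂ) ^ 2 * Top (lap f) x := by rw [lap_Top hf]
  have e2 : Top (fun y => -(h : ℂ) ^ 2 * lap f y + ((W (NR y) : ℝ) : ℂ) * f y) x
      = -(h : ℂ) ^ 2 * Top (lap f) x + ((W (NR x) : ℝ) : ℂ) * Top f x := by
    have h1 : ContDiff ℝ (⊤ : ℕ∞) (fun y : E3 => -(h : ℂ) ^ 2 * lap f y) :=
      contDiff_const.mul hlapf
    have h2 : ContDiff ℝ (⊤ : ℕ∞) (fun y : E3 => ((W (NR y) : ℝ) : ℂ) * f y) :=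
      (contDiff_VC hW).mul hf
    calc Top (fun y => -(h : ℂ) ^ 2 * lap f y + ((W (NR y) : ℝ) : ℂ) * f y) x
        = Top (fun y => -(h : ℂ) ^ 2 * lap f y) x
            + Top (fun y => ((W (NR y) : ℝ) : ℂ) * f y) x := congrFun (Top_add h1 h2) x
      _ = -(h : ℂ) ^ 2 * Top (lap f) x + ((W (NR x) : ℝ) : ℂ) * Top f x := by
          rw [congrFun (Top_const_mul hlapf _) x, congrFun (Top_radial hW hf) x]
  show -(h : ℂ) ^ 2 * lap (fun y => -(h : ℂ) ^ 2 * Top f y) x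
        + ((W (NR x) : ℝ) : ℂ) * (-(h : ℂ) ^ 2 * Top f x)
      = -(h : ℂ) ^ 2 * Top (fun y => -(h : ℂ) ^ 2 * lap f y + ((W (NR y) : ℝ) : ℂ) * f y) x
  rw [e1, e2]
  ring
end
end
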